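/- arXiv:2601.18549 — 7 statements merged into one kernel-verified Lean document; each statement's English description precedes it below -/
import Mathlib

section
/- Let G=(X,w,κ,μ) be a graph and fix 1≤p<∞. The formal graph Laplacian Δ maps every finitely supported function into ℓ^p(X,μ) if and only if condition (C_p) holds; equivalently, for every x∈X the function Δδ_x belongs to ℓ^p(X,μ) if and only if ∑_{y∈X} w(x,y)^p/μ(y)^{p−1}<∞. In particular, for p=1 condition (C_1) always holds, so Δ(C_c(X))⊆ℓ^1(X,μ) for every graph. -/
open Filter Topology MeasureTheory

/-- A weighted graph `G = (X, w, κ, μ)`. -/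
structure WGraph (X : Type*) where
  w : X → X → ℝ
  kap : X → ℝ
  mu : X → ℝ
  w_nonneg : ∀ x y, 0 ≤ w x y
  w_symm : ∀ x y, w x y = w y x
  w_loopless : ∀ x, w x x = 0
  w_summable : ∀ x, Summable (fun y => w x y)
  kap_nonneg : ∀ x, 0 ≤ kap x
  mu_pos : ∀ x, 0 < mu x

namespace WGraph

variable {X : Type*}

/-- Adjacency: `x ∼ y` iff `w x y > 0`. -/
def Adj (G : WGraph X) (x y : X) : Prop := 0 < G.w x y

/-- `G` is connected: any two nodes are joined by a finite walk. -/
def Connected (G : WGraph X) : Prop := ∀ x y : X, Relation.ReflTransGen G.Adj x y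

/-- An infinite path: injective sequence of consecutively adjacent nodes. -/
def InfinitePath (G : WGraph X) (γ : ℕ → X) : Prop :=
  Function.Injective γ ∧ ∀ n, G.Adj (γ n) (γ (n + 1))

/-- Condition (IP): every infinite path has infinite total measure. -/
def CondIP (G : WGraph X) : Prop :=
  ∀ γ : ℕ → X, G.InfinitePath γ → ¬ Summable (fun n => G.mu (γ n))

/-- Condition (B): bounded edge degree. -/
def CondB (G : WGraph X) : Prop :=
  ∃ C : ℝ, ∀ x, (∑' y, G.w x y) / G.mu x ≤ C

/-- Condition (C_p). -/
def CondCp (G : WGraph X) (p : ℝ) : Prop :=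
  ∀ x, Summable (fun y => G.w x y ^ p / G.mu y ^ (p - 1))

/-- Membership in `ℓ^p(X,μ)` for `1 ≤ p < ∞`. -/
def memLp (G : WGraph X) (p : ℝ) (u : X → ℝ) : Prop :=
  Summable (fun x => |u x| ^ p * G.mu x)

/-- The `ℓ^p(X,μ)`-norm. -/
noncomputable def lpNorm (G : WGraph X) (p : ℝ) (u : X → ℝ) : ℝ :=
  (∑' x, |u x| ^ p * G.mu x) ^ (1 / p)

/-- Membership in the formal domain of the graph Laplacian. -/
def inDomLap (G : WGraph X) (u : X → ℝ) : Prop :=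
  ∀ x, Summable (fun y => G.w x y * |u y|)

/-- The formal graph Laplacian. -/
noncomputable def lap (G : WGraph X) (u : X → ℝ) (x : X) : ℝ :=
  (1 / G.mu x) * ∑' y, G.w x y * (u x - u y) + (G.kap x / G.mu x) * u x

/-- The nonlinear operator `𝒜 u = -f ∘ u + Δ u`. -/
noncomputable def Aop (G : WGraph X) (f : ℝ → ℝ) (u : X → ℝ) (x : X) : ℝ :=
  -f (u x) + G.lap u x

/-- `dom_p(𝒜)`. -/
def inDomA (G : WGraph X) (f : ℝ → ℝ) (p : ℝ) (u : X → ℝ) : Prop :=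
  G.memLp p u ∧ G.inDomLap u ∧ G.memLp p (G.Aop f u)

end WGraph

/-- Condition (F1): `f` continuous, monotone decreasing, `f 0 = 0`. -/
def CondF1 (f : ℝ → ℝ) : Prop := Continuous f ∧ Antitone f ∧ f 0 = 0

/-- Condition (F2): `f` uniformly Lipschitz with constant `L > 0`, `f 0 = 0`. -/
def CondF2 (f : ℝ → ℝ) (L : ℝ) : Prop :=
  0 < L ∧ (∀ s t : ℝ, |f t - f s| ≤ L * |t - s|) ∧ f 0 = 0

/-!
Off the node `x`, `Δδ_x` equals `-w(·, x) / μ`, and `|w(y, x) / μ(y)|^p μ(y) = w(x, y)^p / μ(y)^(p-1)`;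
so `Δδ_x ∈ ℓ^p(X, μ)` is exactly condition `(C_p)` at `x`. The Laplacian is linear on its formal
domain, which contains every finitely supported `u`, so `Δu` is a finite linear combination of the
`Δδ_x`, and `ℓ^p(X, μ)` is a vector space for `p ≥ 1`. For `p = 1` the sum in `(C_1)` is
`∑_y w(x, y) < ∞`.
-/

namespace WGraph

variable {X : Type*} (G : WGraph X)

theorem memLp_add {p : ℝ} (hp : 1 ≤ p) {u v : X → ℝ} (hu : G.memLp p u) (hv : G.memLp p v) :
    G.memLp p (u + v) := by
  have abs_add_rpow_le (a b : ℝ) : |a + b| ^ p ≤ 2 ^ (p - 1) * (|a| ^ p + |b| ^ p) :=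
    calc |a + b| ^ p ≤ (|a| + |b|) ^ p :=
          Real.rpow_le_rpow (abs_nonneg _) (abs_add_le a b) (by linarith)
      _ ≤ 2 ^ (p - 1) * (|a| ^ p + |b| ^ p) := by
          exact_mod_cast NNReal.rpow_add_le_mul_rpow_add_rpow ‖a‖₊ ‖b‖₊ hp
  refine .of_nonneg_of_le (fun x => mul_nonneg (by positivity) (G.mu_pos x).le) (fun x => ?_)
    ((hu.add hv).mul_left (2 ^ (p - 1)))
  calc |u x + v x| ^ p * G.mu x ≤ 2 ^ (p - 1) * (|u x| ^ p + |v x| ^ p) * G.mu x :=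
        mul_le_mul_of_nonneg_right (abs_add_rpow_le _ _) (G.mu_pos x).le
    _ = 2 ^ (p - 1) * (|u x| ^ p * G.mu x + |v x| ^ p * G.mu x) := by ring

theorem memLp_smul {p : ℝ} (c : ℝ) {u : X → ℝ} (hu : G.memLp p u) : G.memLp p (c • u) :=
  (hu.mul_left (|c| ^ p)).congr fun x => by
    rw [Pi.smul_apply, smul_eq_mul, abs_mul, Real.mul_rpow (abs_nonneg c) (abs_nonneg (u x)),
      mul_assoc]

theorem memLp_zero {p : ℝ} (hp : p ≠ 0) : G.memLp p 0 := by
  simp [memLp, Real.zero_rpow hp]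

def lpSubmodule {p : ℝ} (hp : 1 ≤ p) : Submodule ℝ (X → ℝ) where
  carrier := {u | G.memLp p u}
  add_mem' := G.memLp_add hp
  zero_mem' := G.memLp_zero (by linarith)
  smul_mem' := G.memLp_smul

def lapDomain : Submodule ℝ (X → ℝ) where
  carrier := {u | G.inDomLap u}
  add_mem' {u v} hu hv x := .of_nonneg_of_le (fun y => mul_nonneg (G.w_nonneg x y) (abs_nonneg _))
    (fun y => by
      simpa only [Pi.add_apply, mul_add] using
        mul_le_mul_of_nonneg_left (abs_add_le (u y) (v y)) (G.w_nonneg x y))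
    ((hu x).add (hv x))
  zero_mem' x := by simp
  smul_mem' c u hu x := ((hu x).mul_left |c|).congr fun y => by
    rw [Pi.smul_apply, smul_eq_mul, abs_mul]
    ring

theorem inDomLap_of_finite_support {u : X → ℝ} (hu : u.support.Finite) : G.inDomLap u :=
  fun _ => summable_of_hasFiniteSupport <| hu.subset <|
    (Function.support_mul_subset_right _ _).trans (Function.support_comp_subset abs_zero u)

theorem summable_mul_sub {u : X → ℝ} (hu : G.inDomLap u) (x : X) :
    Summable fun y => G.w x y * (u x - u y) := by
  have hwu : Summable fun y => G.w x y * u y := (hu x).of_norm_bounded fun y => by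
    rw [Real.norm_eq_abs, abs_mul, abs_of_nonneg (G.w_nonneg x y)]
  exact (((G.w_summable x).mul_right (u x)).sub hwu).congr fun y => by ring

theorem lap_add {u v : X → ℝ} (hu : G.inDomLap u) (hv : G.inDomLap v) :
    G.lap (u + v) = G.lap u + G.lap v := by
  ext x
  have hsum : ∑' y, G.w x y * (u x + v x - (u y + v y)) =
      ∑' y, G.w x y * (u x - u y) + ∑' y, G.w x y * (v x - v y) := by
    rw [← (G.summable_mul_sub hu x).tsum_add (G.summable_mul_sub hv x)]
    exact tsum_congr fun y => by ring
  simp only [lap, Pi.add_apply]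
  rw [hsum]
  ring

theorem lap_smul (c : ℝ) (u : X → ℝ) : G.lap (c • u) = c • G.lap u := by
  ext x
  have hsum : ∑' y, G.w x y * (c * u x - c * u y) = c * ∑' y, G.w x y * (u x - u y) := by
    rw [← tsum_mul_left]
    exact tsum_congr fun y => by ring
  simp only [lap, Pi.smul_apply, smul_eq_mul]
  rw [hsum]
  ring

noncomputable def lapₗ : G.lapDomain →ₗ[ℝ] X → ℝ where
  toFun u := G.lap u
  map_add' u v := G.lap_add u.2 v.2
  map_smul' c u := G.lap_smul c u

theorem lap_sum {ι : Type*} (s : Finset ι) (f : ι → X → ℝ) (hf : ∀ i, G.inDomLap (f i)) :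
    G.lap (∑ i ∈ s, f i) = ∑ i ∈ s, G.lap (f i) := by
  have h := map_sum G.lapₗ (fun i => (⟨f i, hf i⟩ : G.lapDomain)) s
  simpa only [lapₗ, LinearMap.coe_mk, AddHom.coe_mk, Submodule.coe_sum] using h

theorem lap_eq_sum_smul_lap_single [DecidableEq X] {u : X → ℝ} (hu : u.support.Finite) :
    G.lap u = ∑ a ∈ hu.toFinset, u a • G.lap (Pi.single a 1) := by
  have hsingle (a : X) : G.inDomLap (u a • Pi.single a 1) :=
    G.inDomLap_of_finite_support ((Set.finite_singleton a).subset
      ((Function.support_const_smul_subset _ _).trans Pi.support_single_subset))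
  have hdecomp : u = ∑ a ∈ hu.toFinset, u a • Pi.single a 1 := by
    ext y
    by_cases hy : u y = 0 <;> simp [Finset.sum_apply, Pi.single_apply, hy]
  conv_lhs => rw [hdecomp]
  rw [G.lap_sum _ _ hsingle]
  simp only [G.lap_smul]

theorem lap_single_of_ne [DecidableEq X] {x y : X} (h : y ≠ x) :
    G.lap (Pi.single x 1) y = -(G.w y x / G.mu y) := by
  simp only [lap, Pi.single_eq_of_ne h, Pi.single_apply, zero_sub, mul_neg, mul_ite, mul_one,
    mul_zero, tsum_neg, tsum_ite_eq, add_zero]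
  ring

theorem memLp_lap_single_iff [DecidableEq X] (p : ℝ) (x : X) :
    G.memLp p (G.lap (Pi.single x 1)) ↔ Summable fun y => G.w x y ^ p / G.mu y ^ (p - 1) := by
  refine summable_congr_cofinite ?_
  filter_upwards [eventually_cofinite_ne x] with y hy
  have hmu := G.mu_pos y
  rw [G.lap_single_of_ne hy, abs_neg, abs_of_nonneg (div_nonneg (G.w_nonneg y x) hmu.le),
    Real.div_rpow (G.w_nonneg y x) hmu.le, Real.rpow_sub hmu, Real.rpow_one, G.w_symm]
  field_simp

theorem memLp_lap_of_finite_support [DecidableEq X] {p : ℝ} (hp : 1 ≤ p) (hC : G.CondCp p)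
    {u : X → ℝ} (hu : u.support.Finite) : G.memLp p (G.lap u) := by
  rw [G.lap_eq_sum_smul_lap_single hu]
  exact (G.lpSubmodule hp).sum_mem fun a _ =>
    (G.lpSubmodule hp).smul_mem _ ((G.memLp_lap_single_iff p a).2 (hC a))

theorem condCp_one : G.CondCp 1 :=
  fun x => (G.w_summable x).congr fun y => by simp

end WGraph

theorem stmt0_general {X : Type*} [DecidableEq X] (G : WGraph X) (p : ℝ) (hp : 1 ≤ p) :
    ((∀ u : X → ℝ, (Function.support u).Finite → G.memLp p (G.lap u)) ↔ G.CondCp p) ∧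
    (∀ x : X, (G.memLp p (G.lap (fun y => if y = x then (1 : ℝ) else 0)) ↔
      Summable (fun y => G.w x y ^ p / G.mu y ^ (p - 1)))) ∧
    (p = 1 → ∀ u : X → ℝ, (Function.support u).Finite → G.memLp 1 (G.lap u)) := by
  have hsingle (x : X) : (fun y => if y = x then (1 : ℝ) else 0) = Pi.single x 1 :=
    funext fun y => (Pi.single_apply x 1 y).symm
  refine ⟨⟨fun h x => ?_, fun hC u hu => G.memLp_lap_of_finite_support hp hC hu⟩,
    fun x => hsingle x ▸ G.memLp_lap_single_iff p x, ?_⟩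
  · exact (G.memLp_lap_single_iff p x).1
      (h _ ((Set.finite_singleton x).subset Pi.support_single_subset))
  · rintro rfl u hu
    exact G.memLp_lap_of_finite_support le_rfl G.condCp_one hu

/-- the formal graph Laplacian maps every finitely supported function
into `ℓ^p(X,μ)` iff condition `(C_p)` holds; equivalently, for every `x`,
`Δδ_x ∈ ℓ^p(X,μ)` iff `∑_y w(x,y)^p / μ(y)^{p-1} < ∞`.  In particular, for `p = 1`
condition `(C_1)` always holds, so `Δ(C_c(X)) ⊆ ℓ¹(X,μ)` for every graph. -/
theorem stmt0 {X : Type*} [Countable X] [DecidableEq X] (G : WGraph X) (p : ℝ) (hp : 1 ≤ p) :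
    ((∀ u : X → ℝ, (Function.support u).Finite → G.memLp p (G.lap u)) ↔ G.CondCp p) ∧
    (∀ x : X, (G.memLp p (G.lap (fun y => if y = x then (1 : ℝ) else 0)) ↔
      Summable (fun y => G.w x y ^ p / G.mu y ^ (p - 1)))) ∧
    (p = 1 → ∀ u : X → ℝ, (Function.support u).Finite → G.memLp 1 (G.lap u)) :=
  stmt0_general G p hp
end

section
/- Let G=(X,w,κ,μ) be a graph, 1≤p<∞, and u∈C_c(X). Then ∑_{x∈X} Δu(x)|u(x)|^{p−1} sgn(u(x)) μ(x) ≥ 0, where sgn(t)=1 for t>0, sgn(0)=0, sgn(t)=−1 for t<0 (with the convention |u(x)|^{p−1}sgn(u(x)) interpreted as sgn(u(x)) when p=1). Moreover, if G is a finite graph the same inequality holds for every u:X→ℝ. -/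
open Filter Topology MeasureTheory

section AuxStmt1

private lemma phi_nonneg (p : ℝ) {t : ℝ} (ht : 0 ≤ t) :
    0 ≤ |t| ^ (p - 1) * Real.sign t := by
  rcases eq_or_lt_of_le ht with h | h
  · simp [← h]
  · rw [Real.sign_of_pos h]
    positivity

private lemma phi_nonpos (p : ℝ) {t : ℝ} (ht : t ≤ 0) :
    |t| ^ (p - 1) * Real.sign t ≤ 0 := by
  rcases eq_or_lt_of_le ht with h | h
  · simp [h]
  · rw [Real.sign_of_neg h]
    have h0 : 0 ≤ |t| ^ (p - 1) := by positivity
    nlinarith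

private lemma phi_mono (p : ℝ) (hp : 1 ≤ p) :
    Monotone (fun t : ℝ => |t| ^ (p - 1) * Real.sign t) := by
  have hp' : (0 : ℝ) ≤ p - 1 := by linarith
  intro s t hst
  simp only
  rcases le_or_gt s 0 with hs | hs
  · rcases le_or_gt t 0 with ht | ht
    · rcases eq_or_lt_of_le ht with h | h
      · simpa [h] using phi_nonpos p hs
      · have hs' : s < 0 := lt_of_le_of_lt hst h
        rw [Real.sign_of_neg h, Real.sign_of_neg hs']
        have habs : |t| ≤ |s| := by
          rw [abs_of_neg h, abs_of_neg hs']; linarith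
        have := Real.rpow_le_rpow (abs_nonneg t) habs hp'
        nlinarith
    · exact le_trans (phi_nonpos p hs) (phi_nonneg p ht.le)
  · have ht : 0 < t := lt_of_lt_of_le hs hst
    rw [Real.sign_of_pos hs, Real.sign_of_pos ht, mul_one, mul_one]
    have habs : |s| ≤ |t| := by rw [abs_of_pos hs, abs_of_pos ht]; exact hst
    exact Real.rpow_le_rpow (abs_nonneg s) habs hp'

private lemma self_mul_phi_nonneg (p : ℝ) (t : ℝ) :
    0 ≤ t * (|t| ^ (p - 1) * Real.sign t) := by
  rcases le_or_gt t 0 with h | h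
  · nlinarith [phi_nonpos p h]
  · exact mul_nonneg h.le (phi_nonneg p h.le)

private lemma stmt1_key {X : Type*} (G : WGraph X) (p : ℝ) (hp : 1 ≤ p) (u : X → ℝ)
    (S : Finset X) (hS : ∀ x, u x ≠ 0 → x ∈ S) :
    0 ≤ ∑ x ∈ S, G.lap u x * |u x| ^ (p - 1) * Real.sign (u x) * G.mu x := by
  set φ : ℝ → ℝ := fun t => |t| ^ (p - 1) * Real.sign t with hφ
  -- summability facts
  have huy : ∀ x, Summable (fun y => G.w x y * u y) := by
    intro x
    apply summable_of_ne_finset_zero (s := S)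
    intro y hy
    have h : u y = 0 := by
      by_contra h; exact hy (hS y h)
    simp [h]
  have hux : ∀ x, Summable (fun y => G.w x y * u x) := fun x => (G.w_summable x).mul_right _
  -- compute the inner tsum
  have hzero : ∀ x, ∀ y ∉ S, G.w x y * u y = 0 := by
    intro x y hy
    have h : u y = 0 := by by_contra h; exact hy (hS y h)
    simp [h]
  have hg : ∀ x, (∑' y, G.w x y * (u x - u y))
      = u x * (∑' y, G.w x y) - ∑ y ∈ S, G.w x y * u y := by
    intro x
    have h1 : (fun y => G.w x y * (u x - u y))
        = fun y => G.w x y * u x - G.w x y * u y := by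
      funext y; ring
    rw [h1, Summable.tsum_sub (hux x) (huy x), tsum_mul_right,
      tsum_eq_sum (hzero x)]
    ring_nf
  -- rewrite each summand
  have hF : ∀ x, G.lap u x * |u x| ^ (p - 1) * Real.sign (u x) * G.mu x
      = (∑' y, G.w x y * (u x - u y)) * φ (u x) + G.kap x * (u x * φ (u x)) := by
    intro x
    have hm : G.mu x ≠ 0 := (G.mu_pos x).ne'
    simp only [WGraph.lap, hφ]
    field_simp
  rw [Finset.sum_congr rfl (fun x _ => hF x), Finset.sum_add_distrib]
  have hkap : 0 ≤ ∑ x ∈ S, G.kap x * (u x * φ (u x)) :=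
    Finset.sum_nonneg fun x _ =>
      mul_nonneg (G.kap_nonneg x) (self_mul_phi_nonneg p (u x))
  have hmain : 0 ≤ ∑ x ∈ S, (∑' y, G.w x y * (u x - u y)) * φ (u x) := by
    have hsplit : ∀ x, (∑' y, G.w x y * (u x - u y)) * φ (u x)
        = (u x * φ (u x)) * ((∑' y, G.w x y) - ∑ y ∈ S, G.w x y)
          + ∑ y ∈ S, G.w x y * (u x - u y) * φ (u x) := by
      intro x
      rw [hg x]
      have h2 : ∑ y ∈ S, G.w x y * (u x - u y) * φ (u x)
          = (∑ y ∈ S, G.w x y) * (u x * φ (u x))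
            - (∑ y ∈ S, G.w x y * u y) * φ (u x) := by
        rw [Finset.sum_mul, Finset.sum_mul, ← Finset.sum_sub_distrib]
        exact Finset.sum_congr rfl fun y _ => by ring
      rw [h2]; ring
    rw [Finset.sum_congr rfl (fun x _ => hsplit x), Finset.sum_add_distrib]
    have hA : 0 ≤ ∑ x ∈ S, (u x * φ (u x)) * ((∑' y, G.w x y) - ∑ y ∈ S, G.w x y) := by
      refine Finset.sum_nonneg fun x _ => mul_nonneg (self_mul_phi_nonneg p (u x)) ?_
      rw [sub_nonneg]
      exact Summable.sum_le_tsum S (fun y _ => G.w_nonneg x y) (G.w_summable x)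
    have hD : 0 ≤ ∑ x ∈ S, ∑ y ∈ S, G.w x y * (u x - u y) * φ (u x) := by
      have hflip : (∑ x ∈ S, ∑ y ∈ S, G.w x y * (u x - u y) * φ (u x))
          = ∑ x ∈ S, ∑ y ∈ S, G.w y x * (u y - u x) * φ (u y) :=
        Finset.sum_comm
      have h2D : 0 ≤ (∑ x ∈ S, ∑ y ∈ S, G.w x y * (u x - u y) * φ (u x))
          + ∑ x ∈ S, ∑ y ∈ S, G.w x y * (u x - u y) * φ (u x) := by
        nth_rewrite 2 [hflip]
        rw [← Finset.sum_add_distrib]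
        refine Finset.sum_nonneg fun x _ => ?_
        rw [← Finset.sum_add_distrib]
        refine Finset.sum_nonneg fun y _ => ?_
        have hw : G.w y x = G.w x y := G.w_symm y x
        have hterm : G.w x y * (u x - u y) * φ (u x) + G.w y x * (u y - u x) * φ (u y)
            = G.w x y * ((u x - u y) * (φ (u x) - φ (u y))) := by
          rw [hw]; ring
        rw [hterm]
        refine mul_nonneg (G.w_nonneg x y) ?_
        rcases le_total (u y) (u x) with h | h
        · exact mul_nonneg (sub_nonneg.2 h) (sub_nonneg.2 (phi_mono p hp h))
        · nlinarith [sub_nonpos.2 h, sub_nonpos.2 (phi_mono p hp h)]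
      linarith
    exact add_nonneg hA hD
  exact add_nonneg hmain hkap

end AuxStmt1

/-- for finitely supported `u`,
`∑_x Δu(x) |u(x)|^{p-1} sgn(u(x)) μ(x) ≥ 0`; on a finite graph the same holds for
every `u : X → ℝ`. -/
theorem stmt1 {X : Type*} [Countable X] (G : WGraph X) (p : ℝ) (hp : 1 ≤ p) :
    (∀ u : X → ℝ, (Function.support u).Finite →
      0 ≤ ∑' x, G.lap u x * |u x| ^ (p - 1) * Real.sign (u x) * G.mu x) ∧
    (Finite X → ∀ u : X → ℝ,
      0 ≤ ∑' x, G.lap u x * |u x| ^ (p - 1) * Real.sign (u x) * G.mu x) := by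
  constructor
  · intro u hu
    classical
    set S : Finset X := hu.toFinset with hSdef
    have hS : ∀ x, u x ≠ 0 → x ∈ S := fun x hx => hu.mem_toFinset.2 hx
    have hvanish : ∀ x ∉ S, G.lap u x * |u x| ^ (p - 1) * Real.sign (u x) * G.mu x = 0 := by
      intro x hx
      have h : u x = 0 := by
        by_contra h; exact hx (hS x h)
      rw [h, Real.sign_zero, mul_zero, zero_mul]
    rw [tsum_eq_sum hvanish]
    exact stmt1_key G p hp u S hS
  · intro hX u
    haveI := Fintype.ofFinite X
    rw [tsum_fintype]
    exact stmt1_key G p hp u Finset.univ fun x _ => Finset.mem_univ x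
end

section
/- Let G=(X,w,κ,μ) be a connected graph. Suppose either f satisfies (F1) and λ>0, or f satisfies (F2) with constant L>0 and 0<λ<1/L. Let u∈dom(Δ) and assume one of the following: (a) G contains no infinite path; or (b) G satisfies (IP) and there exists p>0 such that ∑_n |u(x_n)|^p μ(x_n)<∞ for every infinite path {x_n}. If u(x)+λ(−f(u(x))+Δu(x)) ≥ 0 for every x∈X, then u ≥ 0 on X; moreover, if in addition u(x_0)=0 for some node x_0, then u≡0. Symmetrically, if u+λ(−f(u)+Δu) ≤ 0 on X then u ≤ 0. -/
open Filter Topology MeasureTheory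

private lemma wg_summable_mul {X : Type*} (G : WGraph X) (u : X → ℝ)
    (hu : G.inDomLap u) (x : X) : Summable (fun y => G.w x y * u y) := by
  apply Summable.of_abs
  refine (hu x).congr fun y => ?_
  rw [abs_mul, abs_of_nonneg (G.w_nonneg x y)]

private lemma wg_key {X : Type*} (G : WGraph X) (f : ℝ → ℝ) (lam c : ℝ)
    (hlam : 0 < lam) (hc : lam * c < 1) (hfb : ∀ t ≤ (0:ℝ), c * t ≤ f t)
    (u : X → ℝ)
    (hpos : ∀ x, 0 ≤ u x + lam * G.Aop f u x)
    (x : X) (hx : u x < 0) : ∃ y, G.Adj x y ∧ u y < u x := by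
  by_contra h
  push_neg at h
  have hT : (∑' y, G.w x y * (u x - u y)) ≤ 0 := by
    apply tsum_nonpos
    intro y
    rcases eq_or_lt_of_le (G.w_nonneg x y) with hw | hw
    · simp [← hw]
    · have h1 := h y hw
      have h2 : u x - u y ≤ 0 := by linarith
      exact mul_nonpos_of_nonneg_of_nonpos hw.le h2
  have hmu := G.mu_pos x
  have hlap : G.lap u x ≤ 0 := by
    unfold WGraph.lap
    have h1 : (1 / G.mu x) * (∑' y, G.w x y * (u x - u y)) ≤ 0 :=
      mul_nonpos_of_nonneg_of_nonpos (by positivity) hT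
    have h2 : (G.kap x / G.mu x) * u x ≤ 0 :=
      mul_nonpos_of_nonneg_of_nonpos (div_nonneg (G.kap_nonneg x) hmu.le) hx.le
    linarith
  have hfx : c * u x ≤ f (u x) := hfb _ hx.le
  have hp := hpos x
  unfold WGraph.Aop at hp
  nlinarith [mul_le_mul_of_nonneg_left hfx hlam.le,
    mul_nonpos_of_nonneg_of_nonpos hlam.le hlap,
    mul_pos (sub_pos.mpr hc) (neg_pos.mpr hx)]

private lemma wg_nonneg {X : Type*} (G : WGraph X) (f : ℝ → ℝ) (lam c : ℝ)
    (hlam : 0 < lam) (hc : lam * c < 1) (hfb : ∀ t ≤ (0:ℝ), c * t ≤ f t)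
    (u : X → ℝ)
    (hcase : (∀ γ : ℕ → X, ¬ G.InfinitePath γ) ∨
      (G.CondIP ∧ ∃ p > (0 : ℝ), ∀ γ : ℕ → X, G.InfinitePath γ →
        Summable (fun n => |u (γ n)| ^ p * G.mu (γ n))))
    (hpos : ∀ x, 0 ≤ u x + lam * G.Aop f u x) : ∀ x, 0 ≤ u x := by
  by_contra h
  push_neg at h
  obtain ⟨x₀, hx₀⟩ := h
  have hstep : ∀ z : {x : X // u x < 0}, ∃ y : {x : X // u x < 0},
      G.Adj z.1 y.1 ∧ u y.1 < u z.1 := by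
    intro z
    obtain ⟨y, hy1, hy2⟩ := wg_key G f lam c hlam hc hfb u hpos z.1 z.2
    exact ⟨⟨y, hy2.trans z.2⟩, hy1, hy2⟩
  choose nxt hadj hlt using hstep
  set g : ℕ → {x : X // u x < 0} := fun n => nxt^[n] ⟨x₀, hx₀⟩ with hg
  have hgsucc : ∀ n, g (n + 1) = nxt (g n) := fun n =>
    Function.iterate_succ_apply' nxt n _
  set γ : ℕ → X := fun n => (g n).1 with hγ
  have hanti : StrictAnti (fun n => u (γ n)) := by
    apply strictAnti_nat_of_succ_lt
    intro n
    have h1 := hlt (g n)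
    rw [← hgsucc n] at h1
    exact h1
  have hinj : Function.Injective γ := by
    intro a b hab
    exact hanti.injective (by simp only [hab])
  have hpath : G.InfinitePath γ := by
    refine ⟨hinj, fun n => ?_⟩
    have h1 := hadj (g n)
    rw [← hgsucc n] at h1
    exact h1
  rcases hcase with hcase | ⟨hIP, p, hp, hsum⟩
  · exact hcase γ hpath
  · have hsum' := hsum γ hpath
    apply hIP γ hpath
    have hc₀ : (0:ℝ) < -u x₀ := neg_pos.mpr hx₀
    have hle : ∀ n, (-u x₀) ^ p ≤ |u (γ n)| ^ p := by
      intro n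
      apply Real.rpow_le_rpow hc₀.le _ hp.le
      have h1 : u (γ n) ≤ u (γ 0) := hanti.antitone (Nat.zero_le n)
      have h2 : γ 0 = x₀ := rfl
      rw [h2] at h1
      calc -u x₀ ≤ -u (γ n) := by linarith
        _ ≤ |u (γ n)| := neg_le_abs _
    have hpow : (0:ℝ) < (-u x₀) ^ p := Real.rpow_pos_of_pos hc₀ p
    refine Summable.of_nonneg_of_le (fun n => (G.mu_pos _).le) (fun n => ?_)
      (hsum'.mul_left ((-u x₀) ^ p)⁻¹)
    have h1 : (-u x₀) ^ p * G.mu (γ n) ≤ |u (γ n)| ^ p * G.mu (γ n) :=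
      mul_le_mul_of_nonneg_right (hle n) (G.mu_pos _).le
    calc G.mu (γ n) = ((-u x₀) ^ p)⁻¹ * ((-u x₀) ^ p * G.mu (γ n)) := by
          field_simp
      _ ≤ ((-u x₀) ^ p)⁻¹ * (|u (γ n)| ^ p * G.mu (γ n)) :=
          mul_le_mul_of_nonneg_left h1 (inv_nonneg.mpr hpow.le)

private lemma wg_zero {X : Type*} (G : WGraph X) (f : ℝ → ℝ) (lam : ℝ)
    (hG : G.Connected) (hlam : 0 < lam) (hf0 : f 0 = 0)
    (u : X → ℝ) (hu : G.inDomLap u)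
    (hpos : ∀ x, 0 ≤ u x + lam * G.Aop f u x)
    (hnn : ∀ x, 0 ≤ u x) (x₀ : X) (h₀ : u x₀ = 0) : ∀ x, u x = 0 := by
  have hadj : ∀ x, u x = 0 → ∀ y, G.Adj x y → u y = 0 := by
    intro x hx y hxy
    have hsum : Summable (fun z => G.w x z * u z) := wg_summable_mul G u hu x
    have hfux : f (u x) = 0 := by rw [hx, hf0]
    have hp := hpos x
    unfold WGraph.Aop WGraph.lap at hp
    rw [hfux, hx] at hp
    have hmu := G.mu_pos x
    have hT : 0 ≤ ∑' z, G.w x z * (0 - u z) := by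
      nlinarith [mul_pos hlam (one_div_pos.mpr hmu)]
    have hTeq : (∑' z, G.w x z * (0 - u z)) = -∑' z, G.w x z * u z := by
      rw [← tsum_neg]
      congr 1
      ext z
      ring
    rw [hTeq] at hT
    have hTle : (∑' z, G.w x z * u z) ≤ 0 := by linarith
    have hterm : G.w x y * u y ≤ 0 := by
      calc G.w x y * u y ≤ ∑' z, G.w x z * u z :=
            Summable.le_tsum hsum y (fun j _ => mul_nonneg (G.w_nonneg x j) (hnn j))
        _ ≤ 0 := hTle
    have hterm' : G.w x y * u y = 0 :=
      le_antisymm hterm (mul_nonneg (G.w_nonneg x y) (hnn y))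
    rcases mul_eq_zero.mp hterm' with h | h
    · exact absurd h (ne_of_gt hxy)
    · exact h
  intro x
  have hwalk := hG x₀ x
  induction hwalk with
  | refl => exact h₀
  | tail _ hbc ih => exact hadj _ ih _ hbc

private lemma wg_lap_neg {X : Type*} (G : WGraph X) (u : X → ℝ) (x : X) :
    G.lap (fun z => -u z) x = -G.lap u x := by
  unfold WGraph.lap
  have h1 : (∑' y, G.w x y * (-u x - -u y)) = -∑' y, G.w x y * (u x - u y) := by
    rw [← tsum_neg]
    congr 1
    ext y
    ring
  rw [h1]
  ring

/-- comparison principle.  If `(id + λ𝒜)u ≥ 0` then `u ≥ 0`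
(and if moreover `u` vanishes at some node then `u ≡ 0`); symmetrically for `≤ 0`. -/
theorem stmt3 {X : Type*} [Countable X] (G : WGraph X) (f : ℝ → ℝ) (lam : ℝ)
    (hG : G.Connected)
    (hf : (CondF1 f ∧ 0 < lam) ∨ (∃ L, CondF2 f L ∧ 0 < lam ∧ lam < 1 / L))
    (u : X → ℝ) (hu : G.inDomLap u)
    (hcase : (∀ γ : ℕ → X, ¬ G.InfinitePath γ) ∨
      (G.CondIP ∧ ∃ p > (0 : ℝ), ∀ γ : ℕ → X, G.InfinitePath γ →
        Summable (fun n => |u (γ n)| ^ p * G.mu (γ n)))) :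
    ((∀ x, 0 ≤ u x + lam * G.Aop f u x) →
      (∀ x, 0 ≤ u x) ∧ (∀ x₀, u x₀ = 0 → ∀ x, u x = 0)) ∧
    ((∀ x, u x + lam * G.Aop f u x ≤ 0) → ∀ x, u x ≤ 0) := by
  have hdata : 0 < lam ∧ f 0 = 0 ∧ ∃ c : ℝ, lam * c < 1 ∧
      (∀ t ≤ (0:ℝ), c * t ≤ f t) ∧ (∀ t : ℝ, 0 ≤ t → f t ≤ c * t) := by
    rcases hf with ⟨⟨_, hanti, hf0⟩, hlam⟩ | ⟨L, ⟨hL, hlip, hf0⟩, hlam, hlam'⟩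
    · refine ⟨hlam, hf0, 0, by norm_num, fun t ht => ?_, fun t ht => ?_⟩
      · have := hanti ht
        rw [hf0] at this
        linarith
      · have := hanti ht
        rw [hf0] at this
        linarith
    · refine ⟨hlam, hf0, L, (lt_div_iff₀ hL).mp hlam', fun t ht => ?_,
        fun t ht => ?_⟩
      · have h1 := hlip 0 t
        rw [hf0, sub_zero, sub_zero, abs_of_nonpos ht] at h1
        have h2 := abs_le.mp h1
        linarith [h2.1]
      · have h1 := hlip 0 t
        rw [hf0, sub_zero, sub_zero, abs_of_nonneg ht] at h1
        have h2 := abs_le.mp h1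
        linarith [h2.2]
  obtain ⟨hlam, hf0, c, hc, hfneg, hfpos⟩ := hdata
  constructor
  · intro hpos
    have hnn : ∀ x, 0 ≤ u x := wg_nonneg G f lam c hlam hc hfneg u hcase hpos
    exact ⟨hnn, fun x₀ h₀ => wg_zero G f lam hG hlam hf0 u hu hpos hnn x₀ h₀⟩
  · intro hneg x
    set f' : ℝ → ℝ := fun t => -f (-t) with hf'
    set v : X → ℝ := fun z => -u z with hv
    have hAop : ∀ x, G.Aop f' v x = -G.Aop f u x := by
      intro x
      unfold WGraph.Aop
      rw [show v = (fun z => -u z) from rfl]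
      rw [wg_lap_neg G u x]
      simp only [hf', neg_neg]
      ring
    have hpos' : ∀ x, 0 ≤ v x + lam * G.Aop f' v x := by
      intro x
      rw [hAop x]
      have := hneg x
      simp only [hv]
      linarith
    have hfneg' : ∀ t ≤ (0:ℝ), c * t ≤ f' t := by
      intro t ht
      have := hfpos (-t) (by linarith)
      simp only [hf']
      linarith
    have hcase' : (∀ γ : ℕ → X, ¬ G.InfinitePath γ) ∨
        (G.CondIP ∧ ∃ p > (0 : ℝ), ∀ γ : ℕ → X, G.InfinitePath γ →
          Summable (fun n => |v (γ n)| ^ p * G.mu (γ n))) := by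
      rcases hcase with h | ⟨hIP, p, hp, hsum⟩
      · exact Or.inl h
      · refine Or.inr ⟨hIP, p, hp, fun γ hγ => ?_⟩
        refine (hsum γ hγ).congr fun n => ?_
        simp [hv, abs_neg]
    have := wg_nonneg G f' lam c hlam hc hfneg' v hcase' hpos' x
    simp only [hv] at this
    linarith
end

section
/- Let G=(X,w,κ,μ) be a finite graph and 1≤p<∞, and let 𝒜=F+Δ with Fu(x)=−f(u(x)). (i) If f satisfies (F1), then 𝒜 is accretive on ℓ^p(X,μ): ‖(u−v)+λ(𝒜u−𝒜v)‖_p ≥ ‖u−v‖_p for all u,v:X→ℝ and all λ>0. (ii) If f satisfies (F2) with constant L>0, then 𝒜 is L-accretive on ℓ^p(X,μ), i.e. 𝒜+L·id is accretive. -/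
open Filter Topology MeasureTheory

/-! For `p ≥ 1` the function `t ↦ |t|^p` is convex with derivative `p φ(t)`, where
`φ(t) = dualMap p t = sign t · |t|^(p-1)`; hence `‖g + h‖_p ≥ ‖g‖_p` as soon as `∑ₓ h(x) φ(g(x)) μ(x) ≥ 0`.
For `g = u - v` and `h = λ(𝒜u - 𝒜v)` this pairing splits into a Laplacian part, nonnegative after
symmetrizing the edge sum because `φ` is monotone, and the pointwise part
`(f(v) - f(u)) φ(u - v)` (plus `L (u - v) φ(u - v)` in case (ii)), which is nonnegative because
`f` is decreasing, resp. `L`-Lipschitz. -/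

/-- `∑ x, h x * dualMap p (g x) * μ x` is a positive multiple of the semi-inner product `[h, g]`
of `ℓ^p(X,μ)` (for `g ≠ 0`). -/
noncomputable def dualMap (p t : ℝ) : ℝ := Real.sign t * |t| ^ (p - 1)

lemma dualMap_neg (p t : ℝ) : dualMap p (-t) = -dualMap p t := by
  simp only [dualMap, Real.sign_neg, abs_neg, neg_mul]

lemma dualMap_of_pos {p t : ℝ} (ht : 0 < t) : dualMap p t = t ^ (p - 1) := by
  rw [dualMap, Real.sign_of_pos ht, abs_of_pos ht, one_mul]

lemma rpow_add_mul_rpow_sub_one_le_abs_add_rpow {p t : ℝ} (hp : 1 ≤ p) (ht : 0 < t) (h : ℝ) :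
    t ^ p + p * h * t ^ (p - 1) ≤ |t + h| ^ p := by
  rcases le_or_gt 0 (t + h) with hth | hth
  · have hs : -1 ≤ h / t := by rw [le_div_iff₀ ht]; linarith
    calc t ^ p + p * h * t ^ (p - 1) = t ^ p * (1 + p * (h / t)) := by
          rw [Real.rpow_sub_one ht.ne']; field_simp
      _ ≤ t ^ p * (1 + h / t) ^ p := by gcongr; exact one_add_mul_self_le_rpow_one_add hs hp
      _ = |t + h| ^ p := by
          rw [← Real.mul_rpow ht.le (by linarith), mul_add, mul_one, mul_div_cancel₀ _ ht.ne',
            abs_of_nonneg hth]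
  · have htp : 0 < t ^ (p - 1) := Real.rpow_pos_of_pos ht _
    have hfactor : t ^ p + p * h * t ^ (p - 1) = t ^ (p - 1) * (t + p * h) := by
      rw [mul_add, ← Real.rpow_add_one ht.ne', sub_add_cancel]; ring
    rw [hfactor]
    exact (mul_nonpos_of_nonneg_of_nonpos htp.le (by nlinarith)).trans (by positivity)

/-- The tangent-line inequality for the convex function `t ↦ |t|^p`, whose derivative is
`p · dualMap p t`. -/
lemma abs_rpow_add_mul_dualMap_le {p : ℝ} (hp : 1 ≤ p) (t h : ℝ) :
    |t| ^ p + p * h * dualMap p t ≤ |t + h| ^ p := by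
  rcases lt_trichotomy t 0 with ht | rfl | ht
  · have := rpow_add_mul_rpow_sub_one_le_abs_add_rpow hp (neg_pos.2 ht) (-h)
    rwa [← dualMap_of_pos (neg_pos.2 ht), dualMap_neg, ← neg_add, abs_neg, ← abs_of_neg ht,
      mul_neg, mul_neg, neg_mul, neg_neg] at this
  · simp only [dualMap, Real.sign_zero, zero_mul, mul_zero, add_zero, zero_add, abs_zero,
      Real.zero_rpow (by linarith : p ≠ 0)]
    positivity
  · rw [abs_of_pos ht, dualMap_of_pos ht]
    exact rpow_add_mul_rpow_sub_one_le_abs_add_rpow hp ht h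

lemma dualMap_sub_mul_sub_nonneg {p : ℝ} (hp : 1 ≤ p) (s t : ℝ) :
    0 ≤ (dualMap p s - dualMap p t) * (s - t) := by
  have hst := abs_rpow_add_mul_dualMap_le hp t (s - t)
  have hts := abs_rpow_add_mul_dualMap_le hp s (t - s)
  rw [add_sub_cancel] at hst hts
  nlinarith

lemma mul_dualMap_nonneg {p c t : ℝ} (hpos : 0 < t → 0 ≤ c) (hneg : t < 0 → c ≤ 0) :
    0 ≤ c * dualMap p t := by
  rw [dualMap, ← mul_assoc]
  refine mul_nonneg ?_ (by positivity)
  rcases lt_trichotomy t 0 with ht | rfl | ht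
  · rw [Real.sign_of_neg ht]; linarith [hneg ht]
  · simp
  · rw [Real.sign_of_pos ht]; linarith [hpos ht]

namespace WGraph

variable {X : Type*} [Fintype X] (G : WGraph X)

lemma lpNorm_eq_sum (p : ℝ) (u : X → ℝ) :
    G.lpNorm p u = (∑ x, |u x| ^ p * G.mu x) ^ (1 / p) := by
  rw [lpNorm, tsum_fintype]

lemma lpNorm_le_lpNorm_add_of_pairing_nonneg {p : ℝ} (hp : 1 ≤ p) (g h : X → ℝ)
    (hpair : 0 ≤ ∑ x, h x * dualMap p (g x) * G.mu x) :
    G.lpNorm p g ≤ G.lpNorm p (fun x => g x + h x) := by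
  rw [lpNorm_eq_sum, lpNorm_eq_sum]
  have hmu := fun x => (G.mu_pos x).le
  refine Real.rpow_le_rpow (Finset.sum_nonneg fun x _ => mul_nonneg (by positivity) (hmu x))
    ?_ (by positivity)
  calc ∑ x, |g x| ^ p * G.mu x
      ≤ ∑ x, |g x| ^ p * G.mu x + p * ∑ x, h x * dualMap p (g x) * G.mu x := by
        nlinarith
    _ = ∑ x, (|g x| ^ p + p * h x * dualMap p (g x)) * G.mu x := by
        rw [Finset.mul_sum, ← Finset.sum_add_distrib]
        exact Finset.sum_congr rfl fun x _ => by ring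
    _ ≤ ∑ x, |g x + h x| ^ p * G.mu x := by
        gcongr with x
        · exact hmu x
        · exact abs_rpow_add_mul_dualMap_le hp (g x) (h x)

lemma lap_sub (u v : X → ℝ) (x : X) :
    G.lap (fun z => u z - v z) x = G.lap u x - G.lap v x := by
  have hsum : ∑ y, G.w x y * (u x - v x - (u y - v y))
      = ∑ y, G.w x y * (u x - u y) - ∑ y, G.w x y * (v x - v y) := by
    rw [← Finset.sum_sub_distrib]
    exact Finset.sum_congr rfl fun y _ => by ring
  simp only [lap, tsum_fintype, hsum]
  ring

/-- After symmetrizing the edge sum, the pairing is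
`½ ∑ₓ ∑ᵧ w(x,y) (g x - g y)(φ(g x) - φ(g y)) + ∑ₓ κ(x) g(x) φ(g x)`, a sum of nonnegative terms. -/
lemma sum_lap_mul_dualMap_nonneg {p : ℝ} (hp : 1 ≤ p) (g : X → ℝ) :
    0 ≤ ∑ x, G.lap g x * dualMap p (g x) * G.mu x := by
  set S := ∑ x, ∑ y, G.w x y * (g x - g y) * dualMap p (g x)
  have hsplit : ∑ x, G.lap g x * dualMap p (g x) * G.mu x
      = S + ∑ x, G.kap x * (g x * dualMap p (g x)) := by
    rw [← Finset.sum_add_distrib]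
    refine Finset.sum_congr rfl fun x _ => ?_
    rw [lap, tsum_fintype, ← Finset.sum_mul]
    field_simp [(G.mu_pos x).ne']
  have hswap : S = ∑ x, ∑ y, G.w x y * (g y - g x) * dualMap p (g y) := by
    rw [Finset.sum_comm]
    exact Finset.sum_congr rfl fun x _ => Finset.sum_congr rfl fun y _ => by rw [G.w_symm]
  have hsymm : 2 * S
      = ∑ x, ∑ y, G.w x y * ((dualMap p (g x) - dualMap p (g y)) * (g x - g y)) := by
    rw [two_mul]
    nth_rewrite 2 [hswap]
    rw [← Finset.sum_add_distrib]
    refine Finset.sum_congr rfl fun x _ => ?_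
    rw [← Finset.sum_add_distrib]
    exact Finset.sum_congr rfl fun y _ => by ring
  have hS : 0 ≤ 2 * S := hsymm ▸ Finset.sum_nonneg fun x _ => Finset.sum_nonneg fun y _ =>
    mul_nonneg (G.w_nonneg x y) (dualMap_sub_mul_sub_nonneg hp _ _)
  have hkap : 0 ≤ ∑ x, G.kap x * (g x * dualMap p (g x)) :=
    Finset.sum_nonneg fun x _ =>
      mul_nonneg (G.kap_nonneg x) (mul_dualMap_nonneg (fun h => h.le) (fun h => h.le))
  rw [hsplit]
  linarith

lemma lpNorm_le_lpNorm_add_smul_lap {p : ℝ} (hp : 1 ≤ p) (g c : X → ℝ)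
    (hc : ∀ x, 0 ≤ c x * dualMap p (g x)) {lam : ℝ} (hlam : 0 ≤ lam) :
    G.lpNorm p g ≤ G.lpNorm p (fun x => g x + lam * (c x + G.lap g x)) := by
  refine G.lpNorm_le_lpNorm_add_of_pairing_nonneg hp g _ ?_
  have hsplit : ∑ x, lam * (c x + G.lap g x) * dualMap p (g x) * G.mu x
      = lam * (∑ x, c x * dualMap p (g x) * G.mu x
        + ∑ x, G.lap g x * dualMap p (g x) * G.mu x) := by
    rw [← Finset.sum_add_distrib, Finset.mul_sum]
    exact Finset.sum_congr rfl fun x _ => by ring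
  rw [hsplit]
  exact mul_nonneg hlam (add_nonneg
    (Finset.sum_nonneg fun x _ => mul_nonneg (hc x) (G.mu_pos x).le)
    (G.sum_lap_mul_dualMap_nonneg hp g))

lemma Aop_sub (f : ℝ → ℝ) (u v : X → ℝ) (x : X) :
    G.Aop f u x - G.Aop f v x = (f (v x) - f (u x)) + G.lap (fun z => u z - v z) x := by
  rw [Aop, Aop, G.lap_sub]
  ring

end WGraph

/-- on a finite graph, `𝒜 = F + Δ` is accretive on `ℓ^p(X,μ)` under
(F1), and `L`-accretive (i.e. `𝒜 + L·id` is accretive) under (F2). -/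
theorem stmt5 {X : Type*} [Finite X] (G : WGraph X) (f : ℝ → ℝ) (p : ℝ) (hp : 1 ≤ p) :
    (CondF1 f → ∀ (u v : X → ℝ) (lam : ℝ), 0 < lam →
      G.lpNorm p (fun x => u x - v x) ≤
        G.lpNorm p (fun x => (u x - v x) + lam * (G.Aop f u x - G.Aop f v x))) ∧
    (∀ L : ℝ, CondF2 f L → ∀ (u v : X → ℝ) (lam : ℝ), 0 < lam →
      G.lpNorm p (fun x => u x - v x) ≤
        G.lpNorm p (fun x =>
          (u x - v x) + lam * ((G.Aop f u x + L * u x) - (G.Aop f v x + L * v x)))) := by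
  have : Fintype X := Fintype.ofFinite X
  constructor
  · rintro ⟨-, hf, -⟩ u v lam hlam
    have hc : ∀ x, 0 ≤ (f (v x) - f (u x)) * dualMap p (u x - v x) := fun x =>
      mul_dualMap_nonneg (fun h => sub_nonneg.2 (hf (sub_pos.1 h).le))
        (fun h => sub_nonpos.2 (hf (sub_neg.1 h).le))
    simpa only [G.Aop_sub] using G.lpNorm_le_lpNorm_add_smul_lap hp _ _ hc hlam.le
  · rintro L ⟨-, hf, -⟩ u v lam hlam
    have hc : ∀ x, 0 ≤ (L * (u x - v x) + (f (v x) - f (u x))) * dualMap p (u x - v x) := by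
      intro x
      have hlip := abs_le.1 (hf (v x) (u x))
      refine mul_dualMap_nonneg (fun h => ?_) (fun h => ?_)
      · rw [abs_of_pos h] at hlip; linarith
      · rw [abs_of_neg h] at hlip; linarith
    have hAop : ∀ x, (G.Aop f u x + L * u x) - (G.Aop f v x + L * v x)
        = (L * (u x - v x) + (f (v x) - f (u x))) + G.lap (fun z => u z - v z) x := by
      intro x
      linear_combination G.Aop_sub f u v x
    simpa only [hAop] using G.lpNorm_le_lpNorm_add_smul_lap hp _ _ hc hlam.le
end

section
/- Let G=(X,w,κ,μ) be a finite graph and 1≤p<∞. Assume either f satisfies (F1) and λ>0, or f satisfies (F2) with constant L>0 and 0<λ<1/L. Then for every g:X→ℝ the equation u+λ(−f(u)+Δu)=g on X admits a unique solution u:X→ℝ. Moreover, if g≥0 then u≥0 and if g≤0 then u≤0, and the a priori estimate ‖u‖_p ≤ C‖g‖_p holds with C=1 under (F1) and C=(1−λL)^{−1} under (F2). -/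
open Filter Topology MeasureTheory

/-!
Multiplied by `μ x`, the equation at a node `x` reads
`c x * u x + λ μ x (L u x - f (u x)) = μ x g x + λ ∑ y, w x y u y`
with `c x = (1 - λL) μ x + λ κ x + λ deg x`, where `L = 0` under (F1) and `s ↦ L s - f s` is
monotone in both cases. Solving the left-hand side for `u x` gives a map that is a contraction
for the sup norm, because `λ deg x < c x`; its fixed point is the solution. A maximum principle
at a node where `u - v` is maximal shows that `u + λ𝒜u ≤ v + λ𝒜v` forces `u ≤ v`: this gives
uniqueness and, comparing with `0`, preservation of sign. For the `ℓ^p` bound, test the equation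
against `|u|^(p-1) sign u`: the Laplacian term is nonnegative by the symmetry of `w`, the
nonlinearity costs at most `λL ‖u‖_p^p`, and Hölder gives `(1 - λL) ‖u‖_p^p ≤ ‖g‖_p ‖u‖_p^(p-1)`.
-/
open Finset

theorem surjective_mul_add_of_monotone {m : ℝ} {h : ℝ → ℝ} (hm : 0 < m) (hh : Monotone h)
    (hc : Continuous h) : Function.Surjective fun s => m * s + h s := by
  have hlin : Tendsto (fun s => m * s) atTop atTop := tendsto_id.const_mul_atTop hm
  refine (continuous_const_mul m |>.add hc).surjective ?_ ?_
  · refine tendsto_atTop_mono' _ ?_ (tendsto_atTop_add_const_right _ (h 0) hlin)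
    filter_upwards [eventually_ge_atTop 0] with s hs using by simpa using hh hs
  · refine tendsto_atBot_mono' _ ?_
      (tendsto_atBot_add_const_right _ (h 0) (tendsto_id.const_mul_atBot hm))
    filter_upwards [eventually_le_atBot 0] with s hs using by simpa using hh hs

theorem mul_abs_sub_le_of_monotone {m : ℝ} {h : ℝ → ℝ} (hh : Monotone h) (s t : ℝ) :
    m * |s - t| ≤ |(m * s + h s) - (m * t + h t)| := by
  wlog hst : t ≤ s generalizing s t
  · simpa only [abs_sub_comm] using this t s (le_of_not_ge hst)
  rw [abs_of_nonneg (sub_nonneg.2 hst)]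
  calc m * (s - t) ≤ m * s + h s - (m * t + h t) := by linarith [hh hst]
    _ ≤ _ := le_abs_self _

theorem rpow_one_div_le_of_mul_le_mul_rpow {a b S p : ℝ} (hp : 0 < p) (ha : 0 < a) (hb : 0 ≤ b)
    (hS : 0 ≤ S) (h : a * S ≤ b * S ^ (1 - 1 / p)) : S ^ (1 / p) ≤ a⁻¹ * b := by
  rcases hS.eq_or_lt with rfl | hS
  · rw [Real.zero_rpow (by positivity)]
    positivity
  rw [le_inv_mul_iff₀ ha]
  refine le_of_mul_le_mul_right ?_ (Real.rpow_pos_of_pos hS (1 - 1 / p))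
  rwa [mul_assoc, ← Real.rpow_add hS, add_sub_cancel, Real.rpow_one]

/-- The pointwise duality map of `ℓ^p`. -/
noncomputable def signedRpow (p s : ℝ) : ℝ := |s| ^ (p - 1) * SignType.sign s

@[simp]
theorem signedRpow_zero_right (p : ℝ) : signedRpow p 0 = 0 := by
  simp [signedRpow]

theorem signedRpow_neg (p s : ℝ) : signedRpow p (-s) = -signedRpow p s := by
  simp [signedRpow, Left.sign_neg]

theorem signedRpow_monotone {p : ℝ} (hp : 1 ≤ p) : Monotone (signedRpow p) := by
  have hpos : ∀ ⦃s t : ℝ⦄, 0 < s → s ≤ t → signedRpow p s ≤ signedRpow p t := by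
    intro s t hs hst
    have ht := hs.trans_le hst
    simp only [signedRpow, sign_pos hs, sign_pos ht, abs_of_pos hs, abs_of_pos ht,
      SignType.coe_one, mul_one]
    gcongr
  have hnonneg : ∀ ⦃t : ℝ⦄, 0 ≤ t → 0 ≤ signedRpow p t := by
    intro t ht
    rcases ht.eq_or_lt with rfl | ht
    · simp
    · simp [signedRpow, sign_pos ht, Real.rpow_nonneg]
  intro s t hst
  rcases lt_trichotomy 0 s with hs | rfl | hs
  · exact hpos hs hst
  · exact (signedRpow_zero_right p).symm ▸ hnonneg hst
  rcases le_or_gt 0 t with ht | ht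
  · exact (neg_nonneg.1 (signedRpow_neg p s ▸ hnonneg (neg_nonneg.2 hs.le))).trans (hnonneg ht)
  · simpa [signedRpow_neg] using hpos (neg_pos.2 ht) (neg_le_neg hst)

theorem mul_signedRpow {p : ℝ} (hp : p ≠ 0) (s : ℝ) : s * signedRpow p s = |s| ^ p := by
  rcases eq_or_ne s 0 with rfl | hs
  · simp [Real.zero_rpow hp]
  rw [signedRpow, mul_left_comm, self_mul_sign, Real.rpow_sub_one (abs_ne_zero.2 hs),
    div_mul_cancel₀ _ (abs_ne_zero.2 hs)]

theorem abs_signedRpow_le (p s : ℝ) : |signedRpow p s| ≤ |s| ^ (p - 1) := by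
  rw [signedRpow, abs_mul, abs_of_nonneg (Real.rpow_nonneg (abs_nonneg s) _)]
  refine mul_le_of_le_one_right (Real.rpow_nonneg (abs_nonneg s) _) ?_
  rcases lt_trichotomy s 0 with hs | rfl | hs <;> simp [sign_neg, sign_pos, *]

theorem sum_mul_rpow_sub_one_mul_le {ι : Type*} (s : Finset ι) {p : ℝ} (hp : 1 ≤ p)
    {μ a b : ι → ℝ} (hμ : ∀ i, 0 ≤ μ i) (ha : ∀ i, 0 ≤ a i) (hb : ∀ i, 0 ≤ b i) :
    ∑ i ∈ s, a i * b i ^ (p - 1) * μ i ≤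
      (∑ i ∈ s, a i ^ p * μ i) ^ (1 / p) * (∑ i ∈ s, b i ^ p * μ i) ^ (1 - 1 / p) := by
  obtain rfl | hp := hp.eq_or_lt
  · simp
  have hpq : p.HolderConjugate p.conjExponent := .conjExponent hp
  set q := p.conjExponent
  have hμp (i : ι) : 0 ≤ μ i ^ (1 / p) := Real.rpow_nonneg (hμ i) _
  have hμq (i : ι) : 0 ≤ μ i ^ (1 / q) := Real.rpow_nonneg (hμ i) _
  have hbp (i : ι) : 0 ≤ b i ^ (p - 1) := Real.rpow_nonneg (hb i) _
  have holder := Real.inner_le_Lp_mul_Lq_of_nonneg s hpq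
    (f := fun i => a i * μ i ^ (1 / p)) (g := fun i => b i ^ (p - 1) * μ i ^ (1 / q))
    (fun i _ => mul_nonneg (ha i) (hμp i)) (fun i _ => mul_nonneg (hbp i) (hμq i))
  have hexp : 1 / p + 1 / q = 1 := by rw [hpq.one_div_add_one_div, div_one]
  have hsplit (i : ι) : a i * μ i ^ (1 / p) * (b i ^ (p - 1) * μ i ^ (1 / q)) =
      a i * b i ^ (p - 1) * μ i := by
    rw [mul_mul_mul_comm, ← Real.rpow_add' (hμ i) (by rw [hexp]; exact one_ne_zero), hexp,
      Real.rpow_one]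
  have hfp (i : ι) : (a i * μ i ^ (1 / p)) ^ p = a i ^ p * μ i := by
    rw [Real.mul_rpow (ha i) (hμp i), ← Real.rpow_mul (hμ i), one_div_mul_cancel hpq.ne_zero,
      Real.rpow_one]
  have hgq (i : ι) : (b i ^ (p - 1) * μ i ^ (1 / q)) ^ q = b i ^ p * μ i := by
    rw [Real.mul_rpow (hbp i) (hμq i), ← Real.rpow_mul (hμ i), ← Real.rpow_mul (hb i),
      one_div_mul_cancel hpq.symm.ne_zero, hpq.sub_one_mul_conj, Real.rpow_one]
  rw [show 1 - 1 / p = 1 / q by rw [one_div, one_div, hpq.one_sub_inv]]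
  simpa only [hsplit, hfp, hgq] using holder

theorem CondF2.continuous {f : ℝ → ℝ} {L : ℝ} (hf : CondF2 f L) : Continuous f :=
  (LipschitzWith.of_dist_le_mul (K := L.toNNReal) fun s t => by
    simpa [Real.dist_eq, hf.1.le] using hf.2.1 t s).continuous

theorem CondF2.monotone_mul_sub {f : ℝ → ℝ} {L : ℝ} (hf : CondF2 f L) :
    Monotone fun s => L * s - f s := fun s t hst => by
  have := (le_abs_self _).trans (hf.2.1 s t)
  rw [abs_of_nonneg (sub_nonneg.2 hst)] at this
  linarith

namespace WGraph

variable {X : Type*}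

theorem Aop_zero (G : WGraph X) {f : ℝ → ℝ} (hf0 : f 0 = 0) (x : X) : G.Aop f 0 x = 0 := by
  simp [Aop, lap, hf0]

variable [Fintype X] (G : WGraph X)

noncomputable def deg (x : X) : ℝ := ∑ y, G.w x y

theorem deg_nonneg (x : X) : 0 ≤ G.deg x := sum_nonneg fun y _ => G.w_nonneg x y

theorem abs_sum_w_mul_sub_le (u v : X → ℝ) (x : X) :
    |∑ y, G.w x y * u y - ∑ y, G.w x y * v y| ≤ G.deg x * dist u v := by
  rw [← sum_sub_distrib, deg, sum_mul]
  refine (abs_sum_le_sum_abs _ _).trans (sum_le_sum fun y _ => ?_)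
  rw [← mul_sub, abs_mul, abs_of_nonneg (G.w_nonneg x y), ← Real.dist_eq]
  exact mul_le_mul_of_nonneg_left (dist_le_pi_dist u v y) (G.w_nonneg x y)

theorem sum_sum_w_mul_sub_mul_nonneg {k : ℝ → ℝ} (hk : Monotone k) (u : X → ℝ) :
    0 ≤ ∑ x, (∑ y, G.w x y * (u x - u y)) * k (u x) := by
  set S := ∑ x, (∑ y, G.w x y * (u x - u y)) * k (u x)
  have hswap : ∑ x, ∑ y, G.w x y * (u x - u y) * k (u y) = -S := by
    rw [sum_comm]
    simp only [S, sum_mul, ← sum_neg_distrib]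
    refine sum_congr rfl fun x _ => sum_congr rfl fun y _ => ?_
    rw [G.w_symm]
    ring
  have hsymm : ∑ x, ∑ y, G.w x y * ((u x - u y) * (k (u x) - k (u y))) = S - -S := by
    rw [← hswap]
    simp only [S, sum_mul, ← sum_sub_distrib]
    refine sum_congr rfl fun x _ => sum_congr rfl fun y _ => ?_
    ring
  have : 0 ≤ ∑ x, ∑ y, G.w x y * ((u x - u y) * (k (u x) - k (u y))) :=
    sum_nonneg fun x _ => sum_nonneg fun y _ => mul_nonneg (G.w_nonneg x y) <| by
      simpa only [mul_comm, id] using (hk.monovary monotone_id).sub_mul_sub_nonneg (u y) (u x)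
  linarith

theorem mu_mul_add_mul_Aop (f : ℝ → ℝ) (lam L : ℝ) (u : X → ℝ) (x : X) :
    G.mu x * (u x + lam * G.Aop f u x) =
      ((1 - lam * L) * G.mu x + lam * G.kap x) * u x + lam * G.mu x * (L * u x - f (u x)) +
        lam * ∑ y, G.w x y * (u x - u y) := by
  have := (G.mu_pos x).ne'
  simp only [Aop, lap, tsum_fintype]
  field_simp
  ring

theorem le_of_add_mul_Aop_le {f : ℝ → ℝ} {lam L : ℝ} (hlam : 0 ≤ lam) (hL : lam * L < 1)
    (hf : Monotone fun s => L * s - f s) {u v : X → ℝ}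
    (huv : ∀ x, u x + lam * G.Aop f u x ≤ v x + lam * G.Aop f v x) : u ≤ v := by
  intro z
  by_contra hz
  have : Nonempty X := ⟨z⟩
  obtain ⟨x, hx⟩ := Finite.exists_max fun y => u y - v y
  have hpos : 0 < u x - v x := (sub_pos.2 (lt_of_not_ge hz)).trans_le (hx z)
  have hcoef : 0 < (1 - lam * L) * G.mu x + lam * G.kap x :=
    add_pos_of_pos_of_nonneg (mul_pos (by linarith) (G.mu_pos x)) (mul_nonneg hlam (G.kap_nonneg x))
  have hf_le : L * v x - f (v x) ≤ L * u x - f (u x) := hf (by linarith)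
  have hsum_le : ∑ y, G.w x y * (v x - v y) ≤ ∑ y, G.w x y * (u x - u y) :=
    sum_le_sum fun y _ => mul_le_mul_of_nonneg_left (by linarith [hx y]) (G.w_nonneg x y)
  have key := mul_le_mul_of_nonneg_left (huv x) (G.mu_pos x).le
  rw [G.mu_mul_add_mul_Aop f lam L, G.mu_mul_add_mul_Aop f lam L] at key
  linarith [mul_pos hcoef hpos, mul_le_mul_of_nonneg_left hsum_le hlam,
    mul_le_mul_of_nonneg_left hf_le (mul_nonneg hlam (G.mu_pos x).le)]

theorem eq_of_add_mul_Aop_eq {f : ℝ → ℝ} {lam L : ℝ} (hlam : 0 ≤ lam) (hL : lam * L < 1)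
    (hf : Monotone fun s => L * s - f s) {u v : X → ℝ}
    (huv : ∀ x, u x + lam * G.Aop f u x = v x + lam * G.Aop f v x) : u = v :=
  le_antisymm (G.le_of_add_mul_Aop_le hlam hL hf fun x => (huv x).le)
    (G.le_of_add_mul_Aop_le hlam hL hf fun x => (huv x).ge)

theorem exists_forall_apply_add_mul_sum_eq {F : X → ℝ → ℝ} {c : X → ℝ} {lam : ℝ}
    (hF : ∀ x s t, c x * |F x s - F x t| ≤ |s - t|) (hlam : 0 ≤ lam)
    (hdeg : ∀ x, lam * G.deg x < c x) (a : X → ℝ) :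
    ∃ u : X → ℝ, ∀ x, F x (a x + lam * ∑ y, G.w x y * u y) = u x := by
  set Φ : (X → ℝ) → X → ℝ := fun u x => F x (a x + lam * ∑ y, G.w x y * u y)
  have hc (x : X) : 0 < c x := (mul_nonneg hlam (G.deg_nonneg x)).trans_lt (hdeg x)
  set K : NNReal := univ.sup fun x => (lam * G.deg x / c x).toNNReal
  have hK : K < 1 := (Finset.sup_lt_iff zero_lt_one).2 fun x _ =>
    Real.toNNReal_lt_one.2 ((div_lt_one (hc x)).2 (hdeg x))
  have hΦ : LipschitzWith K Φ := by
    refine LipschitzWith.of_dist_le_mul fun u v => (dist_pi_le_iff (by positivity)).2 fun x => ?_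
    have hKx : lam * G.deg x ≤ c x * K := by
      rw [← div_le_iff₀' (hc x)]
      exact (Real.le_coe_toNNReal _).trans
        (NNReal.coe_le_coe.2 (le_sup (f := fun x => (lam * G.deg x / c x).toNNReal) (mem_univ x)))
    rw [Real.dist_eq, ← mul_le_mul_iff_right₀ (hc x)]
    calc c x * |Φ u x - Φ v x|
        ≤ |(a x + lam * ∑ y, G.w x y * u y) - (a x + lam * ∑ y, G.w x y * v y)| := hF x _ _
      _ = lam * |∑ y, G.w x y * u y - ∑ y, G.w x y * v y| := by
        rw [add_sub_add_left_eq_sub, ← mul_sub, abs_mul, abs_of_nonneg hlam]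
      _ ≤ lam * (G.deg x * dist u v) :=
        mul_le_mul_of_nonneg_left (G.abs_sum_w_mul_sub_le u v x) hlam
      _ ≤ c x * (K * dist u v) := by
        rw [← mul_assoc, ← mul_assoc]
        exact mul_le_mul_of_nonneg_right hKx dist_nonneg
  exact ⟨_, congrFun (ContractingWith.fixedPoint_isFixedPt (f := Φ) ⟨hK, hΦ⟩)⟩

theorem exists_add_mul_Aop_eq {f : ℝ → ℝ} {lam L : ℝ} (hlam : 0 ≤ lam) (hL : lam * L < 1)
    (hcont : Continuous f) (hf : Monotone fun s => L * s - f s) (g : X → ℝ) :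
    ∃ u : X → ℝ, ∀ x, u x + lam * G.Aop f u x = g x := by
  -- at `x` the equation reads `c x * u x + h x (u x) = μ x * g x + λ ∑ y, w x y * u y`
  set c : X → ℝ := fun x => (1 - lam * L) * G.mu x + lam * G.kap x + lam * G.deg x
  set h : X → ℝ → ℝ := fun x s => lam * G.mu x * (L * s - f s)
  have hh (x : X) : Monotone (h x) := hf.const_mul (mul_nonneg hlam (G.mu_pos x).le)
  have hdeg (x : X) : lam * G.deg x < c x := by
    have := mul_pos (sub_pos.2 hL) (G.mu_pos x)
    have := mul_nonneg hlam (G.kap_nonneg x)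
    simp only [c]
    linarith
  have hc (x : X) : 0 < c x := (mul_nonneg hlam (G.deg_nonneg x)).trans_lt (hdeg x)
  choose F hF using fun x => surjective_mul_add_of_monotone (hc x) (hh x) (by fun_prop)
  obtain ⟨u, hu⟩ := G.exists_forall_apply_add_mul_sum_eq (F := F) (c := c)
    (fun x s t => by
      simpa only [hF] using mul_abs_sub_le_of_monotone (m := c x) (hh x) (F x s) (F x t))
    hlam hdeg fun x => G.mu x * g x
  refine ⟨u, fun x => mul_left_cancel₀ (G.mu_pos x).ne' ?_⟩
  have hx := hF x (G.mu x * g x + lam * ∑ y, G.w x y * u y)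
  rw [hu x] at hx
  rw [G.mu_mul_add_mul_Aop f lam L]
  simp only [c, h, deg] at hx
  simp only [mul_sub, sum_sub_distrib, ← sum_mul] at hx ⊢
  linarith

theorem one_sub_mul_sum_le_of_add_mul_Aop_eq {f : ℝ → ℝ} {p lam L : ℝ} (hp : 1 ≤ p)
    (hlam : 0 ≤ lam) (hf : Monotone fun s => L * s - f s) (hf0 : f 0 = 0) {u g : X → ℝ}
    (hu : ∀ x, u x + lam * G.Aop f u x = g x) :
    (1 - lam * L) * ∑ x, |u x| ^ p * G.mu x ≤
      ∑ x, |g x| * |u x| ^ (p - 1) * G.mu x := by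
  have hφ := signedRpow_monotone hp
  have hmul (s : ℝ) : s * signedRpow p s = |s| ^ p := mul_signedRpow (by linarith) s
  have hpt (x : X) : (1 - lam * L) * (|u x| ^ p * G.mu x) ≤ G.mu x * g x * signedRpow p (u x) -
      lam * ((∑ y, G.w x y * (u x - u y)) * signedRpow p (u x)) := by
    have hsign : 0 ≤ (L * u x - f (u x)) * signedRpow p (u x) := by
      simpa [hf0] using (hf.monovary hφ).sub_mul_sub_nonneg 0 (u x)
    have hpow : 0 ≤ u x * signedRpow p (u x) := hmul (u x) ▸ Real.rpow_nonneg (abs_nonneg _) p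
    rw [← hu x, G.mu_mul_add_mul_Aop f lam L, ← hmul]
    linarith [mul_nonneg (mul_nonneg hlam (G.kap_nonneg x)) hpow,
      mul_nonneg (mul_nonneg hlam (G.mu_pos x).le) hsign]
  have hdual (x : X) :
      G.mu x * g x * signedRpow p (u x) ≤ |g x| * |u x| ^ (p - 1) * G.mu x := by
    have : g x * signedRpow p (u x) ≤ |g x| * |u x| ^ (p - 1) := by
      refine (le_abs_self _).trans ?_
      rw [abs_mul]
      exact mul_le_mul_of_nonneg_left (abs_signedRpow_le p (u x)) (abs_nonneg _)
    linarith [mul_le_mul_of_nonneg_left this (G.mu_pos x).le]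
  have hgreen := mul_nonneg hlam (G.sum_sum_w_mul_sub_mul_nonneg hφ u)
  calc (1 - lam * L) * ∑ x, |u x| ^ p * G.mu x
      ≤ ∑ x, (G.mu x * g x * signedRpow p (u x) -
          lam * ((∑ y, G.w x y * (u x - u y)) * signedRpow p (u x))) := by
        rw [mul_sum]
        exact sum_le_sum fun x _ => hpt x
    _ ≤ ∑ x, G.mu x * g x * signedRpow p (u x) := by
        rw [sum_sub_distrib, ← mul_sum]
        linarith
    _ ≤ ∑ x, |g x| * |u x| ^ (p - 1) * G.mu x := sum_le_sum fun x _ => hdual x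

theorem lpNorm_le_of_add_mul_Aop_eq {f : ℝ → ℝ} {p lam L : ℝ} (hp : 1 ≤ p) (hlam : 0 ≤ lam)
    (hL : lam * L < 1) (hf : Monotone fun s => L * s - f s) (hf0 : f 0 = 0) {u g : X → ℝ}
    (hu : ∀ x, u x + lam * G.Aop f u x = g x) :
    G.lpNorm p u ≤ (1 - lam * L)⁻¹ * G.lpNorm p g := by
  have hsum_nonneg (v : X → ℝ) : 0 ≤ ∑ x, |v x| ^ p * G.mu x :=
    sum_nonneg fun x _ => mul_nonneg (Real.rpow_nonneg (abs_nonneg _) _) (G.mu_pos x).le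
  simp only [lpNorm, tsum_fintype]
  refine rpow_one_div_le_of_mul_le_mul_rpow (by linarith) (by linarith)
    (Real.rpow_nonneg (hsum_nonneg g) _) (hsum_nonneg u) ?_
  exact (G.one_sub_mul_sum_le_of_add_mul_Aop_eq hp hlam hf hf0 hu).trans
    (sum_mul_rpow_sub_one_mul_le _ hp (fun x => (G.mu_pos x).le) (fun x => abs_nonneg _)
      fun x => abs_nonneg _)

end WGraph

/-- on a finite graph, `u + λ(-f(u) + Δu) = g` has a unique solution;
the solution preserves the sign of the datum and satisfies `‖u‖_p ≤ C ‖g‖_p`. -/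
theorem stmt6 {X : Type*} [Finite X] (G : WGraph X) (f : ℝ → ℝ) (p lam C : ℝ)
    (hp : 1 ≤ p)
    (hf : (CondF1 f ∧ 0 < lam ∧ C = 1) ∨
      (∃ L, CondF2 f L ∧ 0 < lam ∧ lam < 1 / L ∧ C = (1 - lam * L)⁻¹))
    (g : X → ℝ) :
    (∃! u : X → ℝ, ∀ x, u x + lam * G.Aop f u x = g x) ∧
    (∀ u : X → ℝ, (∀ x, u x + lam * G.Aop f u x = g x) →
      ((∀ x, 0 ≤ g x) → ∀ x, 0 ≤ u x) ∧
      ((∀ x, g x ≤ 0) → ∀ x, u x ≤ 0) ∧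
      G.lpNorm p u ≤ C * G.lpNorm p g) := by
  obtain ⟨L, hcont, hf0, hmono, hlam, hL, rfl⟩ : ∃ L, Continuous f ∧ f 0 = 0 ∧
      (Monotone fun s => L * s - f s) ∧ 0 < lam ∧ lam * L < 1 ∧ C = (1 - lam * L)⁻¹ := by
    rcases hf with ⟨hf1, hlam, rfl⟩ | ⟨L, hf2, hlam, hlt, rfl⟩
    · exact ⟨0, hf1.1, hf1.2.2, by simpa using hf1.2.1.neg, hlam, by simp, by simp⟩
    · exact ⟨L, hf2.continuous, hf2.2.2, hf2.monotone_mul_sub, hlam,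
        (lt_div_iff₀ hf2.1).1 hlt, rfl⟩
  cases nonempty_fintype X
  have hzero (x : X) : (0 : X → ℝ) x + lam * G.Aop f 0 x = 0 := by simp [G.Aop_zero hf0]
  refine ⟨?_, fun u hu => ⟨fun hg => ?_, fun hg => ?_,
    G.lpNorm_le_of_add_mul_Aop_eq hp hlam.le hL hmono hf0 hu⟩⟩
  · obtain ⟨u, hu⟩ := G.exists_add_mul_Aop_eq hlam.le hL hcont hmono g
    exact ⟨u, hu, fun v hv =>
      G.eq_of_add_mul_Aop_eq hlam.le hL hmono fun x => (hv x).trans (hu x).symm⟩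
  · exact G.le_of_add_mul_Aop_le hlam.le hL hmono fun x => by
      rw [hu]; exact (hzero x).trans_le (hg x)
  · exact G.le_of_add_mul_Aop_le hlam.le hL hmono fun x => by
      rw [hu]; exact (hg x).trans_eq (hzero x).symm
end

section
/- Fix q∈(0,1), M≥0 and T>0. For each partition 0=t_0<t_1<…<t_N=T with steps λ_k=t_k−t_{k−1} and mesh ε:=max_k λ_k, define θ_0=M and, recursively for k=1,…,N, let θ_k be the unique real number with θ_k+λ_k θ_k|θ_k|^{q−1}=θ_{k−1} (so θ_k≥0 and θ_k+λ_k θ_k^q=θ_{k−1}), and let θ_ε:[0,T]→ℝ be the piecewise-constant interpolant θ_ε(t)=θ_k for t∈(t_{k−1},t_k], θ_ε(0)=M. Let θ(t)=[M^{1−q}−(1−q)t]_+^{1/(1−q)}. Then for every t∈[0,T], |θ_ε(t)−θ(t)|→0 as the mesh ε→0. -/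
/-!
In the variable `u = θ ^ (1 - q)` the exact flow is the linear decay `u' = -(1 - q)`, so
`θ(t) = [M ^ (1 - q) - (1 - q) t]₊ ^ (1 / (1 - q))`. For the implicit Euler iterates, the tangent
line inequality of the concave map `x ↦ x ^ (1 - q)` at `θ_k` shows that one step lowers `u` by
at most `(1 - q) λ_k`, and at `θ_{k-1}` that it lowers `u` by at least
`(1 - q) λ_k (1 - λ_k c ^ (q - 1))` as long as `θ_k ≥ c`. Summing, `u_k` is within `O(ε)` of `M ^ (1 - q) - (1 - q) t` whenever
`θ_k ≥ η`, and iterates below `η` are trivially `η`-close to the nonnegative `θ(t)`; continuity of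
`s ↦ s₊ ^ (1 / (1 - q))` finishes the proof.
-/

open Real

theorem rpow_le_rpow_add_mul_rpow_sub_one_mul_sub {p a b : ℝ} (hp0 : 0 ≤ p) (hp1 : p ≤ 1)
    (ha : 0 < a) (hb : 0 ≤ b) : b ^ p ≤ a ^ p + p * a ^ (p - 1) * (b - a) := by
  have hs : -1 ≤ (b - a) / a := by
    rw [le_div_iff₀ ha]; linarith
  calc b ^ p = (a * (1 + (b - a) / a)) ^ p := by congr 1; field_simp; ring
    _ = a ^ p * (1 + (b - a) / a) ^ p := mul_rpow ha.le (by linarith)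
    _ ≤ a ^ p * (1 + p * ((b - a) / a)) := by
        gcongr; exact rpow_one_add_le_one_add_mul_self hs hp0 hp1
    _ = a ^ p + p * a ^ (p - 1) * (b - a) := by
        rw [rpow_sub_one ha.ne']; field_simp

theorem add_mul_rpow_rpow_one_sub_le {q lam x : ℝ} (hq0 : 0 < q) (hq1 : q ≤ 1) (hlam : 0 ≤ lam)
    (hx : 0 ≤ x) : (x + lam * x ^ q) ^ (1 - q) ≤ x ^ (1 - q) + (1 - q) * lam := by
  rcases hx.eq_or_lt with rfl | hx
  · simp only [zero_rpow hq0.ne', mul_zero, add_zero, le_add_iff_nonneg_right]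
    exact mul_nonneg (by linarith) hlam
  have hcancel : x ^ (1 - q - 1) * x ^ q = 1 := by
    rw [← rpow_add hx]; norm_num
  calc (x + lam * x ^ q) ^ (1 - q)
      ≤ x ^ (1 - q) + (1 - q) * x ^ (1 - q - 1) * (x + lam * x ^ q - x) :=
        rpow_le_rpow_add_mul_rpow_sub_one_mul_sub (by linarith) (by linarith) hx (by positivity)
    _ = x ^ (1 - q) + (1 - q) * lam * (x ^ (1 - q - 1) * x ^ q) := by ring
    _ = x ^ (1 - q) + (1 - q) * lam := by rw [hcancel, mul_one]

theorem rpow_one_sub_add_mul_le_add_mul_rpow_rpow_one_sub {q lam c x : ℝ} (hq0 : 0 < q)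
    (hq1 : q ≤ 1) (hlam : 0 ≤ lam) (hc : 0 < c) (hcx : c ≤ x) :
    x ^ (1 - q) + (1 - q) * lam * (1 - lam * c ^ (q - 1)) ≤ (x + lam * x ^ q) ^ (1 - q) := by
  have hx : 0 < x := hc.trans_le hcx
  set y := x + lam * x ^ q with hy_def
  have hxy : x ≤ y := le_add_of_nonneg_right (by positivity)
  have hy : 0 < y := hx.trans_le hxy
  have hratio : 1 - lam * c ^ (q - 1) ≤ x ^ q * y ^ (1 - q - 1) := calc
    1 - lam * c ^ (q - 1) ≤ 1 - lam * x ^ (q - 1) := by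
        gcongr 1 - lam * ?_; exact rpow_le_rpow_of_nonpos hc hcx (by linarith)
    _ = 1 - lam * x ^ q / x := by rw [rpow_sub_one hx.ne', mul_div_assoc]
    _ ≤ 1 - lam * x ^ q / y := by gcongr
    _ = x / y := by field_simp; rw [hy_def]; ring
    _ ≤ (x / y) ^ q := self_le_rpow_of_le_one (by positivity) ((div_le_one hy).2 hxy) hq1
    _ = x ^ q * y ^ (1 - q - 1) := by
        rw [div_rpow hx.le hy.le, show 1 - q - 1 = -q by ring, rpow_neg hy.le, div_eq_mul_inv]
  have htangent := rpow_le_rpow_add_mul_rpow_sub_one_mul_sub (p := 1 - q) (by linarith)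
    (by linarith) hy hx.le
  have hgap : x - y = -(lam * x ^ q) := by rw [hy_def]; ring
  rw [hgap] at htangent
  have := mul_le_mul_of_nonneg_left hratio (mul_nonneg (by linarith : (0 : ℝ) ≤ 1 - q) hlam)
  linear_combination htangent + this

theorem nonneg_of_add_mul_mul_abs_rpow_eq {q lam x y : ℝ} (hlam : 0 ≤ lam) (hy : 0 ≤ y)
    (h : x + lam * (x * |x| ^ (q - 1)) = y) : 0 ≤ x := by
  by_contra! hx
  have := mul_nonneg hlam (rpow_pos_of_pos (abs_pos.2 hx.ne) (q - 1)).le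
  nlinarith

theorem mul_abs_rpow_sub_one_of_nonneg {q x : ℝ} (hq : 0 < q) (hx : 0 ≤ x) :
    x * |x| ^ (q - 1) = x ^ q := by
  rcases hx.eq_or_lt with rfl | hx
  · simp [zero_rpow hq.ne']
  · rw [abs_of_pos hx, rpow_sub_one hx.ne', mul_div_cancel₀ _ hx.ne']

theorem posPart_rpow_one_div_rpow {x r : ℝ} (hx : 0 ≤ x) (hr : r ≠ 0) :
    (x ^ r)⁺ ^ (1 / r) = x := by
  rw [posPart_eq_self.2 (rpow_nonneg hx r), one_div, rpow_rpow_inv hx hr]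

open Filter Topology in
theorem Continuous.exists_pos_sub_lt_and_lt_add {f : ℝ → ℝ} (hf : Continuous f) (s a b c : ℝ)
    {η : ℝ} (hη : 0 < η) :
    ∃ ε > 0, f s - η < f (s - a * ε) ∧ f (s + b * (c + ε) * ε) < f s + η := by
  have hlow : Tendsto (fun ε => f (s - a * ε)) (𝓝 0) (𝓝 (f s)) :=
    (hf.comp (by fun_prop)).tendsto' 0 _ (by simp)
  have hup : Tendsto (fun ε => f (s + b * (c + ε) * ε)) (𝓝 0) (𝓝 (f s)) :=
    (hf.comp (by fun_prop)).tendsto' 0 _ (by simp)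
  have hnear := (hlow.eventually (lt_mem_nhds (sub_lt_self _ hη))).and
    (hup.eventually (gt_mem_nhds (lt_add_of_pos_right _ hη)))
  obtain ⟨ε, hε, hε_pos⟩ := ((hnear.filter_mono nhdsWithin_le_nhds).and
    (self_mem_nhdsWithin (s := Set.Ioi 0))).exists
  exact ⟨ε, hε_pos, hε⟩

/-- The implicit Euler scheme for `θ' = -θ ^ q` with nodes `t`, in the form it takes for
nonnegative iterates, where `θ * |θ| ^ (q - 1) = θ ^ q`. -/
def IsImplicitEuler (q : ℝ) (t θ : ℕ → ℝ) (n : ℕ) : Prop :=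
  ∀ j < n, θ j = θ (j + 1) + (t (j + 1) - t j) * θ (j + 1) ^ q

namespace IsImplicitEuler

variable {q c ε : ℝ} {t θ : ℕ → ℝ} {n : ℕ}

theorem of_mul_abs_rpow (hq : 0 < q) (ht : ∀ j < n, t j ≤ t (j + 1)) (h0 : 0 ≤ θ 0)
    (hrec : ∀ k, 1 ≤ k → k ≤ n →
      θ k + (t k - t (k - 1)) * (θ k * |θ k| ^ (q - 1)) = θ (k - 1)) :
    (∀ j ≤ n, 0 ≤ θ j) ∧ IsImplicitEuler q t θ n := by
  have hrec' (j : ℕ) (hj : j < n) :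
      θ (j + 1) + (t (j + 1) - t j) * (θ (j + 1) * |θ (j + 1)| ^ (q - 1)) = θ j := by
    simpa using hrec (j + 1) (by omega) hj
  have hθ (j : ℕ) (hj : j ≤ n) : 0 ≤ θ j := by
    induction j with
    | zero => exact h0
    | succ j ih =>
      exact nonneg_of_add_mul_mul_abs_rpow_eq (sub_nonneg.2 (ht j hj)) (ih (by omega)) (hrec' j hj)
  refine ⟨hθ, fun j hj => ?_⟩
  rw [← hrec' j hj, mul_abs_rpow_sub_one_of_nonneg hq (hθ (j + 1) hj)]

theorem of_le {m : ℕ} (h : IsImplicitEuler q t θ n) (hm : m ≤ n) : IsImplicitEuler q t θ m :=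
  fun j hj => h j (by omega)

theorem rpow_sub_le (h : IsImplicitEuler q t θ n) (hq0 : 0 < q) (hq1 : q ≤ 1)
    (ht : ∀ j < n, t j ≤ t (j + 1)) (hθ : ∀ j ≤ n, 0 ≤ θ j) :
    θ 0 ^ (1 - q) - (1 - q) * (t n - t 0) ≤ θ n ^ (1 - q) := by
  induction n with
  | zero => simp
  | succ n ih =>
    have hprev := ih (h.of_le n.le_succ) (fun j hj => ht j (by omega)) (fun j hj => hθ j (by omega))
    have hstep := add_mul_rpow_rpow_one_sub_le hq0 hq1 (sub_nonneg.2 (ht n n.lt_succ_self))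
      (hθ (n + 1) le_rfl)
    rw [← h n n.lt_succ_self] at hstep
    linarith

theorem rpow_le (h : IsImplicitEuler q t θ n) (hq0 : 0 < q) (hq1 : q ≤ 1) (hc : 0 < c)
    (ht : ∀ j < n, t j ≤ t (j + 1)) (hmesh : ∀ j < n, t (j + 1) - t j ≤ ε) (hcθ : c ≤ θ n) :
    θ n ^ (1 - q) ≤ θ 0 ^ (1 - q) - (1 - q) * (t n - t 0) * (1 - ε * c ^ (q - 1)) := by
  induction n with
  | zero => simp
  | succ n ih =>
    have hlam : 0 ≤ t (n + 1) - t n := sub_nonneg.2 (ht n n.lt_succ_self)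
    have hθ : θ (n + 1) ≤ θ n := by
      rw [h n n.lt_succ_self, le_add_iff_nonneg_right]
      exact mul_nonneg hlam (rpow_nonneg (hc.le.trans hcθ) q)
    have hprev := ih (h.of_le n.le_succ) (fun j hj => ht j (by omega))
      (fun j hj => hmesh j (by omega)) (hcθ.trans hθ)
    have hstep := rpow_one_sub_add_mul_le_add_mul_rpow_rpow_one_sub hq0 hq1 hlam hc hcθ
    rw [← h n n.lt_succ_self] at hstep
    have : (1 - q) * (t (n + 1) - t n) * (1 - ε * c ^ (q - 1))
        ≤ (1 - q) * (t (n + 1) - t n) * (1 - (t (n + 1) - t n) * c ^ (q - 1)) := by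
      gcongr
      exact hmesh n n.lt_succ_self
    linear_combination hstep + hprev + this

end IsImplicitEuler

theorem stmt18_general (q M T : ℝ) (hq0 : 0 < q) (hq1 : q < 1) (hM : 0 ≤ M) :
    ∀ t ∈ Set.Icc 0 T, ∀ η > (0 : ℝ), ∃ ε₀ > (0 : ℝ),
      ∀ (N : ℕ) (tk : ℕ → ℝ) (θ : ℕ → ℝ),
        1 ≤ N → tk 0 = 0 → tk N = T →
        (∀ k, k < N → tk k < tk (k + 1)) →
        (∀ k, k < N → tk (k + 1) - tk k ≤ ε₀) →
        θ 0 = M →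
        (∀ k, 1 ≤ k → k ≤ N →
          θ k + (tk k - tk (k - 1)) * (θ k * |θ k| ^ (q - 1)) = θ (k - 1)) →
        ∀ k, 1 ≤ k → k ≤ N → tk (k - 1) < t → t ≤ tk k →
          |θ k - (max (M ^ (1 - q) - (1 - q) * t) 0) ^ (1 / (1 - q))| < η := by
  intro t _ η hη
  have hr : 0 < 1 - q := by linarith
  set Φ : ℝ → ℝ := fun s => s⁺ ^ (1 / (1 - q))
  have hΦ_mono : Monotone Φ := fun a b hab =>
    rpow_le_rpow (posPart_nonneg a) (posPart_mono hab) (by positivity)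
  set s₀ := M ^ (1 - q) - (1 - q) * t
  have hΦ_cont : Continuous Φ := continuous_posPart.rpow_const fun _ => Or.inr (by positivity)
  obtain ⟨ε, hε, hεlow, hεup⟩ :=
    hΦ_cont.exists_pos_sub_lt_and_lt_add s₀ (1 - q) ((1 - q) * η ^ (q - 1)) t hη
  refine ⟨ε, hε, fun N tk θ _ htk0 _ hmono hmesh hθ0 hrec k hk1 hkN hkt htk => ?_⟩
  obtain ⟨hθ_nonneg, hscheme⟩ :=
    IsImplicitEuler.of_mul_abs_rpow hq0 (fun i hi => (hmono i hi).le) (hθ0 ▸ hM) hrec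
  have htk_mono (i : ℕ) (hi : i < k) : tk i ≤ tk (i + 1) := (hmono i (by omega)).le
  have htk_le : tk k ≤ t + ε := by
    have := hmesh (k - 1) (by omega)
    rw [Nat.sub_add_cancel hk1] at this
    linarith
  have hθk : Φ (θ k ^ (1 - q)) = θ k := posPart_rpow_one_div_rpow (hθ_nonneg k hkN) hr.ne'
  change |θ k - Φ s₀| < η
  rw [abs_sub_lt_iff, sub_lt_iff_lt_add', sub_lt_comm, ← hθk]
  constructor
  · rcases lt_or_ge (θ k) η with hsmall | hlarge
    · have : 0 ≤ Φ s₀ := rpow_nonneg (posPart_nonneg _) _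
      linarith
    have hbound := (hscheme.of_le hkN).rpow_le hq0 hq1.le hη htk_mono
      (fun i hi => hmesh i (by omega)) hlarge
    rw [hθ0, htk0, sub_zero] at hbound
    have hεK : 0 ≤ ε * η ^ (q - 1) := mul_nonneg hε.le (rpow_nonneg hη.le _)
    have ht_scaled := mul_le_mul_of_nonneg_left htk hr.le
    have htk_scaled := mul_le_mul_of_nonneg_left htk_le (mul_nonneg hr.le hεK)
    exact (hΦ_mono (by nlinarith)).trans_lt hεup
  · have hbound := (hscheme.of_le hkN).rpow_sub_le hq0 hq1.le htk_mono
      fun i hi => hθ_nonneg i (by omega)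
    rw [hθ0, htk0, sub_zero] at hbound
    exact hεlow.trans_le (hΦ_mono (by nlinarith))

/-- implicit Euler approximations of `θ' + θ|θ|^{q-1} = 0`,
`θ(0) = M`, for `q ∈ (0,1)`, converge pointwise on `[0,T]` to
`θ(t) = [M^{1-q} - (1-q)t]₊^{1/(1-q)}` as the mesh tends to `0`: for every
`t ∈ [0,T]` and `η > 0` there is `ε₀ > 0` such that for every partition
`0 = t_0 < … < t_N = T` of mesh `≤ ε₀` and every solution `θ_k` of the implicit
Euler recursion, the piecewise-constant interpolant at `t` (namely `θ_k` on
`(t_{k-1}, t_k]`) is within `η` of `θ(t)`. -/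
theorem stmt18 (q M T : ℝ) (hq0 : 0 < q) (hq1 : q < 1) (hM : 0 ≤ M) (hT : 0 < T) :
    ∀ t ∈ Set.Icc 0 T, ∀ η > (0 : ℝ), ∃ ε₀ > (0 : ℝ),
      ∀ (N : ℕ) (tk : ℕ → ℝ) (θ : ℕ → ℝ),
        1 ≤ N → tk 0 = 0 → tk N = T →
        (∀ k, k < N → tk k < tk (k + 1)) →
        (∀ k, k < N → tk (k + 1) - tk k ≤ ε₀) →
        θ 0 = M →
        (∀ k, 1 ≤ k → k ≤ N →
          θ k + (tk k - tk (k - 1)) * (θ k * |θ k| ^ (q - 1)) = θ (k - 1)) →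
        ∀ k, 1 ≤ k → k ≤ N → tk (k - 1) < t → t ≤ tk k →
          |θ k - (max (M ^ (1 - q) - (1 - q) * t) 0) ^ (1 / (1 - q))| < η :=
  stmt18_general q M T hq0 hq1 hM
end

section
/- Let G=(X,w,κ,μ) be a finite graph with graph Laplacian Δ, let q∈(0,1) and λ>0. Suppose u,g:X→ℝ with u≥0 satisfy u(x)+λ(u(x)^q+Δu(x))=g(x) for every x∈X. Then ‖u‖_∞+λ‖u‖_∞^q ≤ ‖g‖_∞; equivalently, ‖u‖_∞ ≤ ψ_{q,λ}^{−1}(‖g‖_∞), where ψ_{q,λ}(s)=s+λ s|s|^{q−1}. -/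
open Filter Topology MeasureTheory

/-- on a finite graph, if `u ≥ 0` solves
`u(x) + λ(u(x)^q + Δu(x)) = g(x)` with `q ∈ (0,1)` and `λ > 0`, then
`‖u‖_∞ + λ ‖u‖_∞^q ≤ ‖g‖_∞`. -/
theorem stmt19 {X : Type*} [Finite X] (G : WGraph X) (q lam : ℝ)
    (hq0 : 0 < q) (hq1 : q < 1) (hlam : 0 < lam)
    (u g : X → ℝ) (hu : ∀ x, 0 ≤ u x)
    (heq : ∀ x, u x + lam * (u x ^ q + G.lap u x) = g x) :
    (⨆ x, |u x|) + lam * (⨆ x, |u x|) ^ q ≤ ⨆ x, |g x| := by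
  cases isEmpty_or_nonempty X with
  | inl h =>
    simp [Real.iSup_of_isEmpty, Real.zero_rpow hq0.ne']
  | inr h =>
    obtain ⟨x0, hx0⟩ := Finite.exists_max fun x => |u x|
    have habs : ∀ x, |u x| = u x := fun x => abs_of_nonneg (hu x)
    have hMle : ∀ y, u y ≤ u x0 := fun y => by
      have := hx0 y; rwa [habs, habs] at this
    have hsupu : (⨆ x, |u x|) = u x0 := by
      refine le_antisymm (ciSup_le fun x => by rw [habs x]; exact hMle x) ?_
      rw [← habs x0]
      exact le_ciSup (f := fun x => |u x|) (Set.Finite.bddAbove (Set.finite_range _)) x0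
    have hmu := G.mu_pos x0
    have hlap : 0 ≤ G.lap u x0 := by
      unfold WGraph.lap
      have h1 : 0 ≤ ∑' y, G.w x0 y * (u x0 - u y) :=
        tsum_nonneg fun y => mul_nonneg (G.w_nonneg x0 y) (sub_nonneg.2 (hMle y))
      have h2 : (0:ℝ) ≤ 1 / G.mu x0 := by positivity
      have h3 : (0:ℝ) ≤ G.kap x0 / G.mu x0 := div_nonneg (G.kap_nonneg x0) hmu.le
      exact add_nonneg (mul_nonneg h2 h1) (mul_nonneg h3 (hu x0))
    have hg : u x0 + lam * u x0 ^ q ≤ g x0 := by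
      rw [← heq x0]
      have key : lam * (u x0 ^ q + G.lap u x0)
          = lam * u x0 ^ q + lam * G.lap u x0 := mul_add _ _ _
      have h4 : 0 ≤ lam * G.lap u x0 := mul_nonneg hlam.le hlap
      linarith
    have hgsup : g x0 ≤ ⨆ x, |g x| :=
      (le_abs_self _).trans
        (le_ciSup (f := fun x => |g x|) (Set.Finite.bddAbove (Set.finite_range _)) x0)
    rw [hsupu]
    linarith
end
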